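/- Let m ≥ 2 and n = 3m + 1. Then the graph K_1 ∨ mK_3 (the join of a single vertex with m disjoint triangles) satisfies q(K_1 ∨ mK_3) = (n + 4 + √((n-4)² + 16))/2, and moreover q(K_1 ∨ mK_3) < q(S_{n,2}). -/

import Mathlib

open SimpleGraph

/-- The signless Laplacian matrix `Q(G) = D(G) + A(G)` of a finite simple graph. -/
noncomputable def signlessLaplacian {V : Type*} [Fintype V] [DecidableEq V]
    (G : SimpleGraph V) : Matrix V V ℝ :=
  letI := Classical.decRel G.Adj
  Matrix.diagonal (fun v => (G.degree v : ℝ)) + G.adjMatrix ℝ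

/-- The `Q`-index of a graph: the largest eigenvalue of its signless Laplacian. -/
noncomputable def qIndex {V : Type*} [Fintype V] [DecidableEq V]
    (G : SimpleGraph V) : ℝ :=
  sSup (spectrum ℝ (signlessLaplacian G))

/-- `H` is contained in `G` as a (not necessarily induced) subgraph. -/
def ContainsCopy {α β : Type*} (H : SimpleGraph α) (G : SimpleGraph β) : Prop :=
  ∃ f : α ↪ β, ∀ ⦃a b⦄, H.Adj a b → G.Adj (f a) (f b)

/-- The friendship-type graph `F_n`: vertex `0` is dominating; the remaining
vertices are paired `(1,2), (3,4), …`; for even `n` the last vertex is a pendant. -/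
def friendshipGraph (n : ℕ) : SimpleGraph (Fin n) where
  Adj i j := i ≠ j ∧ (i.val = 0 ∨ j.val = 0 ∨ (i.val + 1) / 2 = (j.val + 1) / 2)
  symm := by
    constructor
    intro i j ⟨h1, h2⟩
    exact ⟨h1.symm, by tauto⟩
  loopless := by
    constructor
    intro i ⟨h1, _⟩
    exact h1 rfl

/-- The graph `S_{n,k} = K_k ∨ \overline{K}_{n-k}`: the first `k` vertices form a
complete graph joined to an independent set on the remaining `n - k` vertices. -/
def sGraph (n k : ℕ) : SimpleGraph (Fin n) where
  Adj i j := i ≠ j ∧ (i.val < k ∨ j.val < k)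
  symm := by
    constructor
    intro i j ⟨h1, h2⟩
    exact ⟨h1.symm, h2.symm⟩
  loopless := by
    constructor
    intro i ⟨h1, _⟩
    exact h1 rfl

/-- The number of edges of `G` with one endpoint in `X` and the other in `Y`
(counted as ordered pairs in `X × Y`; for disjoint `X`, `Y` this is `e(X,Y)`). -/
noncomputable def edgesBetween {V : Type*} [Fintype V] [DecidableEq V]
    (G : SimpleGraph V) (X Y : Finset V) : ℕ :=
  letI := Classical.decRel G.Adj
  ((X ×ˢ Y).filter fun p => G.Adj p.1 p.2).card

/-- The number of edges of `G` with both endpoints in `X`. -/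
noncomputable def edgesWithin {V : Type*} [Fintype V] [DecidableEq V]
    (G : SimpleGraph V) (X : Finset V) : ℕ :=
  edgesBetween G X X / 2

/-- The graph `K₁ ∨ m K₃` on `n = 3m + 1` vertices: vertex `0` is dominating, and
the remaining vertices are grouped into `m` triangles `(1,2,3), (4,5,6), …`. -/
def coneTriangles (n : ℕ) : SimpleGraph (Fin n) where
  Adj i j := i ≠ j ∧ (i.val = 0 ∨ j.val = 0 ∨ (i.val - 1) / 3 = (j.val - 1) / 3)
  symm := by
    constructor
    intro i j ⟨h1, h2⟩
    exact ⟨h1.symm, by tauto⟩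
  loopless := by
    constructor
    intro i ⟨h1, _⟩
    exact h1 rfl

/-!
Both graphs have an equitable partition into two cells (the apex and the triangles for
`K₁ ∨ mK₃`, the clique and the independent set for `S_{n,k}`), so each signless Laplacian has a
positive eigenvector that is constant on the cells, with eigenvalue the largest root of the
`2 × 2` quotient matrix. For a nonnegative symmetric matrix an eigenvalue with a positive
eigenvector dominates the spectrum (pair `|u|` for any eigenvector `u` with it), so that root is
the `Q`-index. The comparison is then an inequality between two square roots.
-/

open Finset Matrix Module.End

theorem Matrix.IsSymm.isGreatest_spectrum_of_pos_eigenvector {ι : Type*} [Fintype ι]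
    [DecidableEq ι] [Nonempty ι] {M : Matrix ι ι ℝ} (hM : M.IsSymm) (hM₀ : ∀ i j, 0 ≤ M i j)
    {w : ι → ℝ} (hw : ∀ i, 0 < w i) {r : ℝ} (hMw : M *ᵥ w = r • w) :
    IsGreatest (spectrum ℝ M) r := by
  rw [← spectrum_toLin']
  refine ⟨?_, fun μ hμ => ?_⟩
  · rw [← hasEigenvalue_iff_mem_spectrum]
    refine hasEigenvalue_of_hasEigenvector (x := w) ?_
    rw [hasEigenvector_iff]
    refine ⟨by simpa using hMw, fun h => ?_⟩
    have := hw (Classical.arbitrary ι)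
    simp_all
  rw [← hasEigenvalue_iff_mem_spectrum] at hμ
  obtain ⟨u, hMu, hu⟩ : ∃ u, M *ᵥ u = μ • u ∧ u ≠ 0 := by
    simpa [hasEigenvector_iff] using hμ.exists_hasEigenvector
  -- `|u|` is a subsolution `|μ| • |u| ≤ M *ᵥ |u|`; pair it with the left eigenvector `w`.
  have hsub : ∀ i, |μ| * |u| i ≤ (M *ᵥ |u|) i := fun i =>
    calc |μ| * |u| i = |(M *ᵥ u) i| := by simp [hMu, abs_mul]
      _ ≤ ∑ j, |M i j * u j| := by
        simpa [mulVec, dotProduct] using abs_sum_le_sum_abs (fun j => M i j * u j) univ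
      _ = (M *ᵥ |u|) i := by simp [mulVec, dotProduct, abs_mul, abs_of_nonneg (hM₀ i _)]
  have hpos : 0 < w ⬝ᵥ |u| := by
    obtain ⟨i, hi⟩ := Function.ne_iff.mp hu
    exact sum_pos' (fun j _ => mul_nonneg (hw j).le (abs_nonneg _))
      ⟨i, mem_univ i, mul_pos (hw i) (abs_pos.mpr hi)⟩
  have hle : |μ| * (w ⬝ᵥ |u|) ≤ r * (w ⬝ᵥ |u|) :=
    calc |μ| * (w ⬝ᵥ |u|) = w ⬝ᵥ (|μ| • |u|) := by simp [dotProduct_smul]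
      _ ≤ w ⬝ᵥ (M *ᵥ |u|) :=
        sum_le_sum fun i _ => mul_le_mul_of_nonneg_left (hsub i) (hw i).le
      _ = r * (w ⬝ᵥ |u|) := by
        rw [dotProduct_mulVec, ← mulVec_transpose, hM.eq, hMw, smul_dotProduct, smul_eq_mul]
  exact (le_abs_self μ).trans (le_of_mul_le_mul_right hle hpos)

section signlessLaplacian

variable {V : Type*} [Fintype V] [DecidableEq V] (G : SimpleGraph V)

theorem signlessLaplacian_isSymm : (signlessLaplacian G).IsSymm := by
  classical
  simp [signlessLaplacian, Matrix.IsSymm, Matrix.transpose_add]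

theorem signlessLaplacian_nonneg (i j : V) : 0 ≤ signlessLaplacian G i j := by
  classical
  simp only [signlessLaplacian, Matrix.add_apply, diagonal_apply, adjMatrix_apply]
  split_ifs <;> positivity

theorem qIndex_eq_of_pos_eigenvector [Nonempty V] {w : V → ℝ} (hw : ∀ v, 0 < w v) {r : ℝ}
    (h : signlessLaplacian G *ᵥ w = r • w) : qIndex G = r :=
  ((signlessLaplacian_isSymm G).isGreatest_spectrum_of_pos_eigenvector
    (signlessLaplacian_nonneg G) hw h).csSup_eq

variable [DecidableRel G.Adj]

theorem signlessLaplacian_mulVec_apply (w : V → ℝ) (v : V) :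
    (signlessLaplacian G *ᵥ w) v = G.degree v * w v + ∑ u ∈ G.neighborFinset v, w u := by
  simp only [signlessLaplacian, add_mulVec, Pi.add_apply, mulVec_diagonal, adjMatrix_mulVec_apply]
  congr!

theorem signlessLaplacian_mulVec_ite_apply (p : V → Prop) [DecidablePred p] (a b : ℝ) (v : V) :
    (signlessLaplacian G *ᵥ fun u => if p u then a else b) v =
      G.degree v * (if p v then a else b) + #{u ∈ G.neighborFinset v | p u} * a
        + #{u ∈ G.neighborFinset v | ¬ p u} * b := by
  rw [signlessLaplacian_mulVec_apply, sum_ite, sum_const, sum_const, nsmul_eq_mul, nsmul_eq_mul,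
    add_assoc]

/-- The hypotheses say that `{p, ¬ p}` is an equitable partition with quotient matrix
`!![2α + β, β; γ, γ + 2δ]`; the right-hand side is the largest eigenvalue of that matrix, whose
positive eigenvector, constant on the two cells, is an eigenvector of `Q`. -/
theorem qIndex_eq_of_equitable_partition [Nonempty V] (p : V → Prop) [DecidablePred p]
    {α β γ δ : ℕ}
    (hp : ∀ v, p v →
      #{u ∈ G.neighborFinset v | p u} = α ∧ #{u ∈ G.neighborFinset v | ¬ p u} = β)
    (hnp : ∀ v, ¬ p v →
      #{u ∈ G.neighborFinset v | p u} = γ ∧ #{u ∈ G.neighborFinset v | ¬ p u} = δ)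
    (hβ : 0 < β) (hγ : 0 < γ) :
    qIndex G = ((2 * α + β + (γ + 2 * δ) : ℝ)
      + √((2 * α + β - (γ + 2 * δ) : ℝ) ^ 2 + 4 * β * γ)) / 2 := by
  set a : ℝ := 2 * α + β
  set d : ℝ := γ + 2 * δ
  set s := √((a - d) ^ 2 + 4 * β * γ)
  have hbc : (0 : ℝ) < β * γ := by positivity
  have hs : s ^ 2 = (a - d) ^ 2 + 4 * β * γ := Real.sq_sqrt (by positivity)
  have hs_gt : a - d < s := by
    nlinarith [Real.sqrt_nonneg ((a - d) ^ 2 + 4 * β * γ)]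
  set r := (a + d + s) / 2 with hr
  have hra : 0 < r - a := by rw [hr]; linarith
  have hroot : (r - a) * (r - d) = β * γ := by linear_combination hs / 4
  refine qIndex_eq_of_pos_eigenvector G (w := fun v => if p v then (β : ℝ) else r - a)
    (fun v => by split_ifs <;> positivity) (funext fun v => ?_)
  rw [signlessLaplacian_mulVec_ite_apply, degree, ← card_filter_add_card_filter_not (p := p)]
  by_cases hv : p v
  · obtain ⟨hα, hβ⟩ := hp v hv
    simp only [hv, hα, hβ, if_true, Pi.smul_apply, smul_eq_mul]
    push_cast
    ring
  · obtain ⟨hγ, hδ⟩ := hnp v hv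
    simp only [hv, hγ, hδ, if_false, Pi.smul_apply, smul_eq_mul]
    push_cast
    linear_combination -hroot

end signlessLaplacian

section coneTriangles

instance (n : ℕ) : DecidableRel (coneTriangles n).Adj := fun i j =>
  inferInstanceAs (Decidable (i ≠ j ∧ (i.val = 0 ∨ j.val = 0 ∨ (i.val - 1) / 3 = (j.val - 1) / 3)))

@[simp]
theorem coneTriangles_adj {n : ℕ} {i j : Fin n} : (coneTriangles n).Adj i j ↔
    i ≠ j ∧ (i.val = 0 ∨ j.val = 0 ∨ (i.val - 1) / 3 = (j.val - 1) / 3) := Iff.rfl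

variable {m : ℕ}

theorem coneTriangles_card_neighbors_of_val_eq_zero {v : Fin (3 * m + 1)} (hv : v.val = 0) :
    #{u ∈ (coneTriangles (3 * m + 1)).neighborFinset v | u.val = 0} = 0 ∧
      #{u ∈ (coneTriangles (3 * m + 1)).neighborFinset v | ¬ u.val = 0} = 3 * m := by
  constructor
  · rw [card_eq_zero, filter_eq_empty_iff]
    intro u hu hu0
    exact ((mem_neighborFinset _ _ _).mp hu).1 (Fin.ext (hv.trans hu0.symm))
  · have : {u ∈ (coneTriangles (3 * m + 1)).neighborFinset v | ¬ u.val = 0} = univ.erase v := by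
      ext u
      simp only [mem_filter, mem_neighborFinset, coneTriangles_adj, mem_erase, mem_univ, ne_eq,
        and_true, Fin.ext_iff]
      omega
    rw [this, card_erase_of_mem (mem_univ v), card_univ, Fintype.card_fin, Nat.add_sub_cancel]

theorem coneTriangles_card_neighbors_of_val_ne_zero {v : Fin (3 * m + 1)} (hv : v.val ≠ 0) :
    #{u ∈ (coneTriangles (3 * m + 1)).neighborFinset v | u.val = 0} = 1 ∧
      #{u ∈ (coneTriangles (3 * m + 1)).neighborFinset v | ¬ u.val = 0} = 2 := by
  have hv_lt := v.isLt
  constructor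
  · refine card_eq_one.mpr ⟨⟨0, by omega⟩, ?_⟩
    ext u
    simp only [mem_filter, mem_neighborFinset, coneTriangles_adj, mem_singleton, ne_eq,
      Fin.ext_iff]
    omega
  · -- the other two vertices of the triangle `{3k + 1, 3k + 2, 3k + 3}` containing `v`
    set k := (v.val - 1) / 3
    set r := (v.val - 1) % 3
    refine card_eq_two.mpr ⟨⟨3 * k + 1 + (r + 1) % 3, by omega⟩,
      ⟨3 * k + 1 + (r + 2) % 3, by omega⟩, by simp only [ne_eq, Fin.ext_iff]; omega, ?_⟩
    ext u
    simp only [mem_filter, mem_neighborFinset, coneTriangles_adj, mem_insert, mem_singleton,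
      ne_eq, Fin.ext_iff]
    omega

theorem qIndex_coneTriangles (hm : 1 ≤ m) :
    qIndex (coneTriangles (3 * m + 1))
      = (((3 * m + 1 : ℕ) : ℝ) + 4 + √((((3 * m + 1 : ℕ) : ℝ) - 4) ^ 2 + 16)) / 2 := by
  rw [qIndex_eq_of_equitable_partition _ (fun v : Fin (3 * m + 1) => v.val = 0)
    (fun _ => coneTriangles_card_neighbors_of_val_eq_zero)
    (fun _ => coneTriangles_card_neighbors_of_val_ne_zero) (by omega) one_pos]
  push_cast
  ring_nf

end coneTriangles

section sGraph

variable {n k : ℕ}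

instance : DecidableRel (sGraph n k).Adj := fun i j =>
  inferInstanceAs (Decidable (i ≠ j ∧ (i.val < k ∨ j.val < k)))

@[simp]
theorem sGraph_adj {i j : Fin n} : (sGraph n k).Adj i j ↔ i ≠ j ∧ (i.val < k ∨ j.val < k) :=
  Iff.rfl

theorem sGraph_card_neighbors_of_lt (hkn : k ≤ n) {v : Fin n} (hv : v.val < k) :
    #{u ∈ (sGraph n k).neighborFinset v | u.val < k} = k - 1 ∧
      #{u ∈ (sGraph n k).neighborFinset v | ¬ u.val < k} = n - k := by
  have hcard : #(univ.filter fun u : Fin n => u.val < k) = k := by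
    rw [Fin.card_filter_val_lt, min_eq_right hkn]
  constructor
  · have : {u ∈ (sGraph n k).neighborFinset v | u.val < k}
        = (univ.filter fun u : Fin n => u.val < k).erase v := by
      ext u
      simp only [mem_filter, mem_neighborFinset, sGraph_adj, mem_erase, mem_univ, true_and]
      tauto
    rw [this, card_erase_of_mem (by simpa using hv), hcard]
  · have : {u ∈ (sGraph n k).neighborFinset v | ¬ u.val < k}
        = univ.filter fun u : Fin n => ¬ u.val < k := by
      ext u
      simp only [mem_filter, mem_neighborFinset, sGraph_adj, mem_univ, true_and]
      constructor
      · exact And.right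
      · exact fun hu => ⟨⟨fun h => hu (h ▸ hv), Or.inl hv⟩, hu⟩
    have hsplit := card_filter_add_card_filter_not (s := univ) (fun u : Fin n => u.val < k)
    rw [hcard, card_univ, Fintype.card_fin] at hsplit
    rw [this]
    omega

theorem sGraph_card_neighbors_of_not_lt (hkn : k ≤ n) {v : Fin n} (hv : ¬ v.val < k) :
    #{u ∈ (sGraph n k).neighborFinset v | u.val < k} = k ∧
      #{u ∈ (sGraph n k).neighborFinset v | ¬ u.val < k} = 0 := by
  constructor
  · have : {u ∈ (sGraph n k).neighborFinset v | u.val < k}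
        = univ.filter fun u : Fin n => u.val < k := by
      ext u
      simp only [mem_filter, mem_neighborFinset, sGraph_adj, mem_univ, true_and]
      exact ⟨And.right, fun hu => ⟨⟨fun h => hv (h ▸ hu), Or.inr hu⟩, hu⟩⟩
    rw [this, Fin.card_filter_val_lt, min_eq_right hkn]
  · rw [card_eq_zero, filter_eq_empty_iff]
    intro u hu hu'
    simp only [mem_neighborFinset, sGraph_adj] at hu
    tauto

theorem qIndex_sGraph (hk : 0 < k) (hkn : k < n) :
    qIndex (sGraph n k)
      = ((n : ℝ) + 2 * k - 2 + √(((n : ℝ) - 2) ^ 2 + 4 * k * ((n : ℝ) - k))) / 2 := by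
  have : Nonempty (Fin n) := ⟨⟨0, by omega⟩⟩
  rw [qIndex_eq_of_equitable_partition _ (fun v : Fin n => v.val < k)
    (fun _ => sGraph_card_neighbors_of_lt hkn.le)
    (fun _ => sGraph_card_neighbors_of_not_lt hkn.le) (by omega) hk]
  push_cast [Nat.cast_sub hk, Nat.cast_sub hkn.le]
  ring_nf

end sGraph

/-- For `m ≥ 2` and `n = 3m + 1`,
`q(K₁ ∨ m K₃) = (n + 4 + √((n-4)² + 16)) / 2` and `q(K₁ ∨ m K₃) < q(S_{n,2})`. -/
theorem stmt_14 (m n : ℕ) (hm : 2 ≤ m) (hn : n = 3 * m + 1) :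
    qIndex (coneTriangles n)
        = ((n : ℝ) + 4 + Real.sqrt (((n : ℝ) - 4) ^ 2 + 16)) / 2 ∧
      qIndex (coneTriangles n) < qIndex (sGraph n 2) := by
  subst hn
  rw [qIndex_coneTriangles (by omega), qIndex_sGraph two_pos (by omega)]
  refine ⟨rfl, ?_⟩
  set x : ℝ := ((3 * m + 1 : ℕ) : ℝ)
  have hx : 7 ≤ x := by
    simp only [x]
    norm_cast
    omega
  set s := √((x - 4) ^ 2 + 16)
  have hs₀ : 0 ≤ s := Real.sqrt_nonneg _
  have hs : s ^ 2 = (x - 4) ^ 2 + 16 := Real.sq_sqrt (by positivity)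
  have hsx : s ≤ x := (Real.sqrt_le_left (by linarith)).mpr (by nlinarith)
  -- `s ≤ x` gives `(s + 2) ^ 2 ≤ x ^ 2 - 4x + 36 < (x - 2) (x + 6)` once `x > 6`
  have hlt : s + 2 < √((x - 2) ^ 2 + 8 * (x - 2)) :=
    (Real.lt_sqrt (by linarith)).mpr (by nlinarith)
  norm_num
  linarith
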